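/- arXiv:1008.5338 — 3 statements merged into one kernel-verified Lean document; each statement's English description precedes it below -/
import Mathlib

section
/- Let (X,T) be a topological dynamical system, f ∈ C(X,ℝ), and let (K_n)_{n≥1} be a sequence of non-empty closed subsets of X. Then lim_{δ→0} limsup_{n→∞} (1/n) log P_n(T,f,δ,K_n) = sup_{𝒰} limsup_{n→∞} (1/n) log P_n(T,f,𝒰,K_n), where the supremum is over all finite open covers 𝒰 of X. -/
open Filter Set Topology MeasureTheory

noncomputable section

variable {X : Type*}

/-- Birkhoff sum `f_n(x) = ∑_{j<n} f(T^j x)`. -/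
def birk (T : X → X) (f : X → ℝ) (n : ℕ) (x : X) : ℝ :=
  ∑ j ∈ Finset.range n, f (T^[j] x)

/-- `P_n(T,f,δ,K)`: supremum of `∑_{x∈E} exp f_n(x)` over `(n,δ)`-separated
subsets `E ⊆ K`. -/
def sepPn [MetricSpace X] (T : X → X) (f : X → ℝ) (n : ℕ) (δ : ℝ) (K : Set X) : ℝ :=
  sSup { r : ℝ | ∃ E : Finset X, ↑E ⊆ K ∧
    (∀ x ∈ E, ∀ y ∈ E, x ≠ y → ∃ i < n, δ < dist (T^[i] x) (T^[i] y)) ∧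
    r = ∑ x ∈ E, Real.exp (birk T f n x) }

/-- The topological pressure of `T` for the subset `K`:
`P(T,f,K) = lim_{δ→0} limsup_n (1/n) log P_n(T,f,δ,K)`; since the expression is
nonincreasing in `δ`, the limit is the supremum over `δ > 0`. -/
def pres [MetricSpace X] (T : X → X) (f : X → ℝ) (K : Set X) : EReal :=
  ⨆ (δ : ℝ) (_ : 0 < δ), atTop.limsup fun n : ℕ =>
    ((Real.log (sepPn T f n δ K) / n : ℝ) : EReal)

/-- The `ε`-stable set `W^s_ε(x,T)`. -/
def epsStable [MetricSpace X] (T : X → X) (ε : ℝ) (x : X) : Set X :=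
  { y | ∀ n : ℕ, dist (T^[n] x) (T^[n] y) ≤ ε }

/-- The topological pressure of the preimages of the `ε`-stable set of `x`:
`P_s(T,f,x,ε) = lim_{δ→0} limsup_n (1/n) log P_n(T,f,δ,T^{-n}W^s_ε(x,T))`. -/
def Ps [MetricSpace X] (T : X → X) (f : X → ℝ) (x : X) (ε : ℝ) : EReal :=
  ⨆ (δ : ℝ) (_ : 0 < δ), atTop.limsup fun n : ℕ =>
    ((Real.log (sepPn T f n δ ((T^[n]) ⁻¹' epsStable T ε x)) / n : ℝ) : EReal)

/-- A finite open cover of `X`. -/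
def IsOpenCover [TopologicalSpace X] (𝒰 : Finset (Set X)) : Prop :=
  (∀ U ∈ 𝒰, IsOpen U) ∧ ⋃₀ (𝒰 : Set (Set X)) = univ

/-- A finite Borel cover of `X`. -/
def IsBorelCover [MeasurableSpace X] (𝒱 : Finset (Set X)) : Prop :=
  (∀ V ∈ 𝒱, MeasurableSet V) ∧ ⋃₀ (𝒱 : Set (Set X)) = univ

/-- `𝒱` refines the iterated cover `𝒰_0^{n-1} = ⋁_{i<n} T^{-i}𝒰`. -/
def RefinesIter (T : X → X) (𝒰 : Finset (Set X)) (n : ℕ) (𝒱 : Finset (Set X)) : Prop :=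
  ∀ V ∈ 𝒱, ∃ g : Fin n → Set X, (∀ i, g i ∈ 𝒰) ∧ V ⊆ ⋂ i : Fin n, (T^[(i : ℕ)]) ⁻¹' g i

/-- `P_n(T,f,𝒰,K)`: infimum over finite Borel covers `𝒱` refining `𝒰_0^{n-1}` of
`∑_{V∈𝒱} sup_{x ∈ V∩K} exp f_n(x)` (an empty summand contributes `0`, which is
`Real.sSup ∅`). -/
def covPn [MeasurableSpace X] (T : X → X) (f : X → ℝ) (𝒰 : Finset (Set X)) (n : ℕ)
    (K : Set X) : ℝ :=
  sInf { r : ℝ | ∃ 𝒱 : Finset (Set X), IsBorelCover 𝒱 ∧ RefinesIter T 𝒰 n 𝒱 ∧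
    r = ∑ V ∈ 𝒱, sSup ((fun x => Real.exp (birk T f n x)) '' (V ∩ K)) }

/-- A finite Borel partition of `X`. -/
def IsFinPartition [MeasurableSpace X] (α : Finset (Set X)) : Prop :=
  (∀ A ∈ α, MeasurableSet A) ∧ ⋃₀ (α : Set (Set X)) = univ ∧
    (α : Set (Set X)).Pairwise Disjoint

/-- `H_μ(⋁_{i<n} T^{-i}α)`, computed over all atoms `⋂_{i<n} T^{-i} A_i`. -/
def dynH [MeasurableSpace X] (μ : Measure X) (T : X → X) (α : Finset (Set X)) (n : ℕ) : ℝ :=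
  ∑ g : Fin n → α, Real.negMulLog ((μ (⋂ i : Fin n, (T^[(i : ℕ)]) ⁻¹' (g i : Set X))).toReal)

/-- `h_μ(T,α) = lim_n (1/n) H_μ(α_0^{n-1})`, which for an invariant measure equals
the infimum of `(1/n) H_μ(α_0^{n-1})` over `n ≥ 1`. -/
def entPart [MeasurableSpace X] (μ : Measure X) (T : X → X) (α : Finset (Set X)) : ℝ :=
  ⨅ n : ℕ, dynH μ T α (n + 1) / (n + 1 : ℝ)

/-- The measure-theoretic entropy `h_μ(T)`. -/
def mEnt [MeasurableSpace X] (μ : Measure X) (T : X → X) : EReal :=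
  ⨆ (α : Finset (Set X)) (_ : IsFinPartition α), ((entPart μ T α : ℝ) : EReal)

/-- The measure-theoretic pressure `P_μ(T,f) = h_μ(T) + ∫ f dμ`. -/
def mPres [MeasurableSpace X] (μ : Measure X) (T : X → X) (f : X → ℝ) : EReal :=
  mEnt μ T + ((∫ x, f x ∂μ : ℝ) : EReal)

/-- The stable set `W^s(x,T)`. -/
def stableSet [MetricSpace X] (T : X → X) (x : X) : Set X :=
  { y | Tendsto (fun n : ℕ => dist (T^[n] x) (T^[n] y)) atTop (𝓝 0) }

/-- A Cantor set: a nonempty compact perfect totally disconnected set. -/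
def IsCantorSet [TopologicalSpace X] (C : Set X) : Prop :=
  C.Nonempty ∧ IsCompact C ∧ Perfect C ∧ IsTotallyDisconnected C

/-- A weakly mixing set for `T`. -/
def IsWeaklyMixingSet [TopologicalSpace X] (T : X → X) (A : Set X) : Prop :=
  A.Nonempty ∧ IsClosed A ∧
  ∃ B : Set X, B ⊆ A ∧
    (∃ C : ℕ → Set X, (∀ n, IsCantorSet (C n)) ∧ B = ⋃ n, C n) ∧
    closure B = A ∧
    ∀ C : Set X, C ⊆ B → IsCantorSet C →
      ∀ g : C → X, Continuous g → (∀ c : C, g c ∈ A) →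
        ∃ φ : ℕ → ℕ, StrictMono φ ∧
          ∀ c : C, Tendsto (fun i => T^[φ i] (c : X)) atTop (𝓝 (g c))

/-!
If every member of `𝒰` has diameter at most `δ`, distinct points of an `(n, δ)`-separated set lie in
distinct members of any refinement of `𝒰_0^{n-1}`, so `P_n(T,f,δ,K) ≤ P_n(T,f,𝒰,K)`. Conversely,
if `δ` is below a Lebesgue number of `𝒰` and below the modulus of uniform continuity of `f` at `η`,
the closed Bowen balls around a maximal `(n, δ)`-separated subset of `K` refine `𝒰_0^{n-1}` and
cover `K`; completed by atoms of `𝒰_0^{n-1}` disjoint from `K` they form a Borel cover, whence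
`P_n(T,f,𝒰,K) ≤ e^{nη} P_n(T,f,δ,K)`. Taking `(1/n) log`, limsups and `η → 0` gives equality.
-/

section Birkhoff

variable {T : X → X} {f : X → ℝ} {n : ℕ}

lemma birk_le_of_forall_le {M : ℝ} (hM : ∀ x, f x ≤ M) (x : X) : birk T f n x ≤ n * M := by
  simpa [birk] using Finset.sum_le_card_nsmul (Finset.range n) _ M fun j _ => hM (T^[j] x)

lemma le_birk_of_forall_le {m : ℝ} (hm : ∀ x, m ≤ f x) (x : X) : n * m ≤ birk T f n x := by
  simpa [birk] using Finset.card_nsmul_le_sum (Finset.range n) _ m fun j _ => hm (T^[j] x)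

lemma birk_le_birk_add {x y : X} {η : ℝ} (h : ∀ i < n, f (T^[i] y) ≤ f (T^[i] x) + η) :
    birk T f n y ≤ birk T f n x + n * η := by
  calc birk T f n y ≤ ∑ i ∈ Finset.range n, (f (T^[i] x) + η) :=
        Finset.sum_le_sum fun i hi => h i (Finset.mem_range.1 hi)
    _ = birk T f n x + n * η := by simp [birk, Finset.sum_add_distrib]

end Birkhoff

section Separated

variable [PseudoMetricSpace X] {T : X → X} {n : ℕ} {δ : ℝ} {𝒰 : Finset (Set X)}

def IsDynSeparated (T : X → X) (n : ℕ) (δ : ℝ) (E : Finset X) : Prop :=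
  ∀ x ∈ E, ∀ y ∈ E, x ≠ y → ∃ i < n, δ < dist (T^[i] x) (T^[i] y)

def bowenBall (T : X → X) (n : ℕ) (x : X) (r : ℝ) : Set X :=
  {y | ∀ i < n, dist (T^[i] x) (T^[i] y) < r}

def closedBowenBall (T : X → X) (n : ℕ) (x : X) (r : ℝ) : Set X :=
  {y | ∀ i < n, dist (T^[i] x) (T^[i] y) ≤ r}

lemma mem_bowenBall_self {x : X} {r : ℝ} (hr : 0 < r) : x ∈ bowenBall T n x r :=
  fun i _ => by simpa using hr

lemma isOpen_bowenBall (hT : Continuous T) (x : X) (r : ℝ) : IsOpen (bowenBall T n x r) := by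
  have : bowenBall T n x r = ⋂ i ∈ Finset.range n, {y | dist (T^[i] x) (T^[i] y) < r} := by
    ext; simp [bowenBall]
  rw [this]
  exact isOpen_biInter_finset fun i _ =>
    isOpen_lt (continuous_const.dist (hT.iterate i)) continuous_const

lemma isClosed_closedBowenBall (hT : Continuous T) (x : X) (r : ℝ) :
    IsClosed (closedBowenBall T n x r) := by
  have : closedBowenBall T n x r = ⋂ i ∈ Finset.range n, {y | dist (T^[i] x) (T^[i] y) ≤ r} := by
    ext; simp [closedBowenBall]
  rw [this]
  exact isClosed_biInter fun i _ =>
    isClosed_le (continuous_const.dist (hT.iterate i)) continuous_const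

lemma IsDynSeparated.eq_of_forall_dist_le {E : Finset X} (hE : IsDynSeparated T n δ E)
    {x y : X} (hx : x ∈ E) (hy : y ∈ E) (h : ∀ i < n, dist (T^[i] x) (T^[i] y) ≤ δ) : x = y := by
  by_contra hxy
  obtain ⟨i, hi, hlt⟩ := hE x hx y hy hxy
  exact (h i hi).not_gt hlt

lemma IsDynSeparated.insert [DecidableEq X] {E : Finset X} (hE : IsDynSeparated T n δ E) {y : X}
    (hy : ∀ x ∈ E, ∃ i < n, δ < dist (T^[i] x) (T^[i] y)) :
    IsDynSeparated T n δ (insert y E) := by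
  intro a ha b hb hab
  rcases Finset.mem_insert.1 ha with rfl | ha' <;> rcases Finset.mem_insert.1 hb with rfl | hb'
  · exact absurd rfl hab
  · simpa only [dist_comm] using hy b hb'
  · exact hy a ha'
  · exact hE a ha' b hb' hab

lemma exists_card_le_of_isDynSeparated [CompactSpace X] (hT : Continuous T) (n : ℕ)
    (hδ : 0 < δ) : ∃ N : ℕ, ∀ E, IsDynSeparated T n δ E → E.card ≤ N := by
  obtain ⟨t, ht⟩ := isCompact_univ.elim_finite_subcover (fun x => bowenBall T n x (δ / 2))
    (fun x => isOpen_bowenBall hT x _) fun x _ =>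
      mem_iUnion.2 ⟨x, mem_bowenBall_self (by positivity)⟩
  choose c hct hxc using fun x => mem_iUnion₂.1 (ht (mem_univ x))
  refine ⟨t.card, fun E hE => Finset.card_le_card_of_injOn c (fun x _ => hct x) ?_⟩
  intro x hx y hy hcxy
  refine hE.eq_of_forall_dist_le hx hy fun i hi => ?_
  have hxi := hxc x i hi
  have hyi := hxc y i hi
  rw [hcxy] at hxi
  linarith [dist_triangle_left (T^[i] x) (T^[i] y) (T^[i] (c y))]

lemma exists_isDynSeparated_forall_mem_closedBowenBall [CompactSpace X] (hT : Continuous T)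
    (n : ℕ) (hδ : 0 < δ) (K : Set X) :
    ∃ E : Finset X, ↑E ⊆ K ∧ IsDynSeparated T n δ E ∧
      ∀ y ∈ K, ∃ x ∈ E, y ∈ closedBowenBall T n x δ := by
  classical
  obtain ⟨N, hN⟩ := exists_card_le_of_isDynSeparated hT n hδ
  obtain ⟨E, ⟨hEK, hE⟩, hmax⟩ := (measure fun E : Finset X => N - E.card).wf.has_min
    {E | ↑E ⊆ K ∧ IsDynSeparated T n δ E} ⟨∅, by simp, by simp [IsDynSeparated]⟩
  refine ⟨E, hEK, hE, fun y hy => ?_⟩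
  by_contra! hfar
  have hfar' : ∀ x ∈ E, ∃ i < n, δ < dist (T^[i] x) (T^[i] y) := by
    simpa [closedBowenBall] using hfar
  have hyE : y ∉ E := fun hyE => by
    obtain ⟨i, -, hi⟩ := hfar' y hyE
    simp at hi
    linarith
  have hins := hE.insert hfar'
  refine hmax (insert y E) ⟨by simpa using insert_subset hy hEK, hins⟩ ?_
  have hcard := hN _ hins
  rw [Finset.card_insert_of_notMem hyE] at hcard
  show N - (insert y E).card < N - E.card
  rw [Finset.card_insert_of_notMem hyE]
  omega

lemma exists_isOpenCover_dist_le [CompactSpace X] (hδ : 0 < δ) :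
    ∃ 𝒰 : Finset (Set X), IsOpenCover 𝒰 ∧ ∀ U ∈ 𝒰, ∀ x ∈ U, ∀ y ∈ U, dist x y ≤ δ := by
  classical
  obtain ⟨t, ht⟩ := isCompact_univ.elim_finite_subcover (fun x : X => Metric.ball x (δ / 2))
    (fun _ => Metric.isOpen_ball) fun x _ => mem_iUnion.2 ⟨x, Metric.mem_ball_self (by positivity)⟩
  refine ⟨t.image fun z => Metric.ball z (δ / 2), ⟨?_, ?_⟩, ?_⟩
  · simp only [Finset.mem_image]
    rintro _ ⟨z, -, rfl⟩
    exact Metric.isOpen_ball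
  · refine eq_univ_of_forall fun x => ?_
    obtain ⟨z, hz, hxz⟩ := mem_iUnion₂.1 (ht (mem_univ x))
    exact ⟨_, Finset.mem_image_of_mem _ hz, hxz⟩
  · simp only [Finset.mem_image]
    rintro _ ⟨z, -, rfl⟩ x hx y hy
    linarith [dist_triangle_right x y z, Metric.mem_ball.1 hx, Metric.mem_ball.1 hy]

lemma refinesIter_image_closedBowenBall {L : ℝ}
    (hL : ∀ x : X, ∃ U ∈ 𝒰, Metric.ball x L ⊆ U) (hδL : δ < L) (n : ℕ) (E : Finset X) :
    RefinesIter T 𝒰 n (E.image fun x => closedBowenBall T n x δ) := by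
  choose U hU hUL using hL
  simp only [RefinesIter, Finset.mem_image]
  rintro _ ⟨x, -, rfl⟩
  refine ⟨fun i => U (T^[i] x), fun i => hU _, fun y hy => mem_iInter.2 fun i => hUL _ ?_⟩
  rw [Metric.mem_ball, dist_comm]
  exact (hy i i.2).trans_lt hδL

end Separated

section Pressure

variable {T : X → X} {f : X → ℝ} {n : ℕ} {δ : ℝ} {K : Set X} {𝒰 : Finset (Set X)}

lemma bddAbove_image_exp_birk [TopologicalSpace X] [CompactSpace X] (hf : Continuous f)
    (n : ℕ) (s : Set X) : BddAbove ((fun x => Real.exp (birk T f n x)) '' s) := by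
  obtain ⟨M, hM⟩ := (isCompact_range hf).bddAbove
  exact ⟨Real.exp (n * M), forall_mem_image.2 fun x _ =>
    Real.exp_le_exp.2 (birk_le_of_forall_le (fun y => hM ⟨y, rfl⟩) x)⟩

lemma sSup_image_exp_birk_nonneg (s : Set X) :
    0 ≤ sSup ((fun x => Real.exp (birk T f n x)) '' s) :=
  Real.sSup_nonneg <| forall_mem_image.2 fun _ _ => (Real.exp_pos _).le

lemma le_sepPn [MetricSpace X] [CompactSpace X] (hT : Continuous T) (hf : Continuous f)
    (hδ : 0 < δ) {E : Finset X} (hEK : ↑E ⊆ K) (hE : IsDynSeparated T n δ E) :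
    ∑ x ∈ E, Real.exp (birk T f n x) ≤ sepPn T f n δ K := by
  refine le_csSup ?_ ⟨E, hEK, hE, rfl⟩
  obtain ⟨N, hN⟩ := exists_card_le_of_isDynSeparated hT n hδ
  obtain ⟨M, hM⟩ := (isCompact_range hf).bddAbove
  refine ⟨N * Real.exp (n * M), ?_⟩
  rintro _ ⟨E', -, hE', rfl⟩
  calc ∑ x ∈ E', Real.exp (birk T f n x) ≤ E'.card * Real.exp (n * M) := by
        simpa using Finset.sum_le_card_nsmul E' _ _ fun x _ =>
          Real.exp_le_exp.2 (birk_le_of_forall_le (T := T) (n := n) (fun y => hM ⟨y, rfl⟩) x)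
    _ ≤ N * Real.exp (n * M) := by gcongr; exact_mod_cast hN E' hE'

lemma sepPn_pos [MetricSpace X] [CompactSpace X] (hT : Continuous T) (hf : Continuous f)
    (hδ : 0 < δ) (hK : K.Nonempty) : 0 < sepPn T f n δ K := by
  obtain ⟨x, hx⟩ := hK
  refine (Real.exp_pos (birk T f n x)).trans_le ?_
  simpa using le_sepPn hT hf hδ (E := {x}) (by simpa using hx) (by simp [IsDynSeparated])

variable [MeasurableSpace X]

lemma covPn_nonneg : 0 ≤ covPn T f 𝒰 n K :=
  Real.sInf_nonneg <| by
    rintro _ ⟨𝒱, -, -, rfl⟩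
    exact Finset.sum_nonneg fun V _ => sSup_image_exp_birk_nonneg _

lemma covPn_le {𝒱 : Finset (Set X)} (h𝒱 : IsBorelCover 𝒱) (href : RefinesIter T 𝒰 n 𝒱) :
    covPn T f 𝒰 n K ≤ ∑ V ∈ 𝒱, sSup ((fun x => Real.exp (birk T f n x)) '' (V ∩ K)) := by
  refine csInf_le ⟨0, ?_⟩ ⟨𝒱, h𝒱, href, rfl⟩
  rintro _ ⟨𝒱', -, -, rfl⟩
  exact Finset.sum_nonneg fun V _ => sSup_image_exp_birk_nonneg _

lemma exists_isBorelCover_refinesIter_superset [TopologicalSpace X] [OpensMeasurableSpace X]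
    (hT : Measurable T) (h𝒰 : IsOpenCover 𝒰) {𝒟 : Finset (Set X)}
    (h𝒟 : ∀ D ∈ 𝒟, MeasurableSet D) (href : RefinesIter T 𝒰 n 𝒟) :
    ∃ 𝒱, IsBorelCover 𝒱 ∧ RefinesIter T 𝒰 n 𝒱 ∧ 𝒟 ⊆ 𝒱 ∧
      ∀ V ∈ 𝒱, V ∉ 𝒟 → Disjoint V (⋃₀ ↑𝒟) := by
  classical
  let atom : (Fin n → 𝒰) → Set X := fun g => (⋂ i : Fin n, T^[i] ⁻¹' (g i : Set X)) \ ⋃₀ ↑𝒟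
  refine ⟨𝒟 ∪ Finset.univ.image atom, ⟨?_, ?_⟩, ?_, Finset.subset_union_left, ?_⟩
  · intro V hV
    rcases Finset.mem_union.1 hV with hV | hV
    · exact h𝒟 V hV
    · obtain ⟨g, -, rfl⟩ := Finset.mem_image.1 hV
      exact (MeasurableSet.iInter fun i => (h𝒰.1 _ (g i).2).measurableSet.preimage
        (hT.iterate _)).diff (MeasurableSet.sUnion 𝒟.countable_toSet h𝒟)
  · refine eq_univ_of_forall fun x => ?_
    by_cases hx : x ∈ ⋃₀ ↑𝒟
    · obtain ⟨D, hD, hxD⟩ := hx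
      exact ⟨D, Finset.mem_union_left _ hD, hxD⟩
    · choose U hU hxU using fun i : Fin n => mem_sUnion.1 (h𝒰.2 ▸ mem_univ (T^[i] x))
      exact ⟨atom fun i => ⟨U i, hU i⟩, Finset.mem_union_right _ (Finset.mem_image_of_mem _
        (Finset.mem_univ _)), mem_iInter.2 hxU, hx⟩
  · intro V hV
    rcases Finset.mem_union.1 hV with hV | hV
    · exact href V hV
    · obtain ⟨g, -, rfl⟩ := Finset.mem_image.1 hV
      exact ⟨fun i => g i, fun i => (g i).2, sdiff_subset⟩
  · intro V hV hV𝒟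
    obtain ⟨g, -, rfl⟩ := Finset.mem_image.1 ((Finset.mem_union.1 hV).resolve_left hV𝒟)
    exact disjoint_sdiff_left

lemma covPn_le_sum_of_subset_sUnion [TopologicalSpace X] [OpensMeasurableSpace X]
    (hT : Measurable T) (h𝒰 : IsOpenCover 𝒰) {𝒟 : Finset (Set X)}
    (h𝒟 : ∀ D ∈ 𝒟, MeasurableSet D) (href : RefinesIter T 𝒰 n 𝒟) (hK : K ⊆ ⋃₀ ↑𝒟) :
    covPn T f 𝒰 n K ≤ ∑ D ∈ 𝒟, sSup ((fun x => Real.exp (birk T f n x)) '' (D ∩ K)) := by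
  obtain ⟨𝒱, h𝒱, href𝒱, h𝒟𝒱, hdisj⟩ := exists_isBorelCover_refinesIter_superset hT h𝒰 h𝒟 href
  refine (covPn_le h𝒱 href𝒱).trans_eq (Finset.sum_subset h𝒟𝒱 fun V hV hV𝒟 => ?_).symm
  rw [((hdisj V hV hV𝒟).mono_right hK).inter_eq, image_empty, Real.sSup_empty]

lemma covPn_pos [TopologicalSpace X] [CompactSpace X] [OpensMeasurableSpace X]
    (hT : Measurable T) (hf : Continuous f) (h𝒰 : IsOpenCover 𝒰) (hK : K.Nonempty) :
    0 < covPn T f 𝒰 n K := by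
  obtain ⟨m, hm⟩ := (isCompact_range hf).bddBelow
  obtain ⟨𝒱₀, h𝒱₀, href₀, -⟩ := exists_isBorelCover_refinesIter_superset (n := n) hT h𝒰
    (𝒟 := ∅) (by simp) (by simp [RefinesIter])
  refine (Real.exp_pos (n * m)).trans_le (le_csInf ⟨_, 𝒱₀, h𝒱₀, href₀, rfl⟩ ?_)
  rintro _ ⟨𝒱, h𝒱, -, rfl⟩
  obtain ⟨x, hx⟩ := hK
  obtain ⟨V, hV, hxV⟩ := mem_sUnion.1 (h𝒱.2 ▸ mem_univ x)
  calc Real.exp (n * m) ≤ Real.exp (birk T f n x) :=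
        Real.exp_le_exp.2 (le_birk_of_forall_le (fun y => hm ⟨y, rfl⟩) x)
    _ ≤ sSup ((fun x => Real.exp (birk T f n x)) '' (V ∩ K)) :=
        le_csSup (bddAbove_image_exp_birk hf n _) ⟨x, ⟨hxV, hx⟩, rfl⟩
    _ ≤ _ := Finset.single_le_sum (fun W _ => sSup_image_exp_birk_nonneg (W ∩ K)) hV

end Pressure

section Comparison

variable [MetricSpace X] [CompactSpace X] [MeasurableSpace X]
  {T : X → X} {f : X → ℝ} {δ : ℝ} {𝒰 : Finset (Set X)}

lemma sepPn_le_covPn [OpensMeasurableSpace X] (hT : Measurable T) (hf : Continuous f)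
    (h𝒰 : IsOpenCover 𝒰) (h𝒰δ : ∀ U ∈ 𝒰, ∀ x ∈ U, ∀ y ∈ U, dist x y ≤ δ)
    (n : ℕ) (K : Set X) :
    sepPn T f n δ K ≤ covPn T f 𝒰 n K := by
  classical
  refine Real.sSup_le ?_ covPn_nonneg
  rintro _ ⟨E, hEK, (hE : IsDynSeparated T n δ E), rfl⟩
  obtain ⟨𝒱₀, h𝒱₀, href₀, -⟩ := exists_isBorelCover_refinesIter_superset (n := n) hT h𝒰
    (𝒟 := ∅) (by simp) (by simp [RefinesIter])
  refine le_csInf ⟨_, 𝒱₀, h𝒱₀, href₀, rfl⟩ ?_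
  rintro _ ⟨𝒱, h𝒱, href, rfl⟩
  choose V hV hxV using fun x => mem_sUnion.1 (h𝒱.2 ▸ mem_univ x)
  have hinj : InjOn V E := fun x hx y hy hVxy => hE.eq_of_forall_dist_le hx hy fun i hi => by
    obtain ⟨g, hg, hVg⟩ := href _ (hV x)
    exact h𝒰δ _ (hg ⟨i, hi⟩) _ (mem_iInter.1 (hVg (hxV x)) ⟨i, hi⟩) _
      (mem_iInter.1 (hVg (hVxy ▸ hxV y)) ⟨i, hi⟩)
  calc ∑ x ∈ E, Real.exp (birk T f n x)
      ≤ ∑ x ∈ E, sSup ((fun x => Real.exp (birk T f n x)) '' (V x ∩ K)) :=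
        Finset.sum_le_sum fun x hx =>
          le_csSup (bddAbove_image_exp_birk hf n _) ⟨x, ⟨hxV x, hEK hx⟩, rfl⟩
    _ = ∑ W ∈ E.image V, sSup ((fun x => Real.exp (birk T f n x)) '' (W ∩ K)) :=
        (Finset.sum_image (f := fun W => sSup ((fun x => Real.exp (birk T f n x)) '' (W ∩ K)))
          hinj).symm
    _ ≤ ∑ W ∈ 𝒱, sSup ((fun x => Real.exp (birk T f n x)) '' (W ∩ K)) :=
        Finset.sum_le_sum_of_subset_of_nonneg (Finset.image_subset_iff.2 fun x _ => hV x)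
          fun W _ _ => sSup_image_exp_birk_nonneg _

lemma covPn_le_exp_mul_sepPn [BorelSpace X] (hT : Continuous T) (hf : Continuous f)
    (h𝒰 : IsOpenCover 𝒰) {η : ℝ} (hη : 0 < η) :
    ∃ δ > 0, ∀ n K, covPn T f 𝒰 n K ≤ Real.exp (n * η) * sepPn T f n δ K := by
  classical
  obtain ⟨L, hL, hleb⟩ := lebesgue_number_lemma_of_metric_sUnion isCompact_univ
    (fun U hU => h𝒰.1 U hU) h𝒰.2.symm.subset
  obtain ⟨δ₀, hδ₀, hfδ₀⟩ := Metric.uniformContinuous_iff.1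
    (CompactSpace.uniformContinuous_of_continuous hf) η hη
  have hδ : 0 < min (L / 2) (δ₀ / 2) := by positivity
  set δ := min (L / 2) (δ₀ / 2)
  have hfδ : ∀ a b, dist a b ≤ δ → f b ≤ f a + η := fun a b hab => by
    have := hfδ₀ (hab.trans_lt ((min_le_right _ _).trans_lt (half_lt_self hδ₀)))
    rw [Real.dist_eq, abs_sub_lt_iff] at this
    linarith
  refine ⟨δ, hδ, fun n K => ?_⟩
  obtain ⟨E, hEK, hE, hKE⟩ := exists_isDynSeparated_forall_mem_closedBowenBall hT n hδ K
  have hball : ∀ x, sSup ((fun y => Real.exp (birk T f n y)) '' (closedBowenBall T n x δ ∩ K))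
      ≤ Real.exp (n * η) * Real.exp (birk T f n x) := fun x => by
    refine Real.sSup_le (forall_mem_image.2 fun y hy => ?_) (by positivity)
    rw [← Real.exp_add, add_comm]
    exact Real.exp_le_exp.2 (birk_le_birk_add fun i hi => hfδ _ _ (hy.1 i hi))
  calc covPn T f 𝒰 n K
      ≤ ∑ D ∈ E.image fun x => closedBowenBall T n x δ,
          sSup ((fun y => Real.exp (birk T f n y)) '' (D ∩ K)) := by
        refine covPn_le_sum_of_subset_sUnion hT.measurable h𝒰 ?_
          (refinesIter_image_closedBowenBall (fun x => hleb x (mem_univ x))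
            ((min_le_left _ _).trans_lt (half_lt_self hL)) n E) fun y hy => ?_
        · simp only [Finset.mem_image]
          rintro _ ⟨x, -, rfl⟩
          exact (isClosed_closedBowenBall hT x δ).measurableSet
        · obtain ⟨x, hx, hyx⟩ := hKE y hy
          exact ⟨_, Finset.mem_image_of_mem _ hx, hyx⟩
    _ ≤ ∑ x ∈ E, sSup ((fun y => Real.exp (birk T f n y)) '' (closedBowenBall T n x δ ∩ K)) :=
        Finset.sum_image_le_of_nonneg fun _ _ => sSup_image_exp_birk_nonneg _
    _ ≤ ∑ x ∈ E, Real.exp (n * η) * Real.exp (birk T f n x) := Finset.sum_le_sum fun x _ => hball x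
    _ ≤ Real.exp (n * η) * sepPn T f n δ K := by
        rw [← Finset.mul_sum]
        gcongr
        exact le_sepPn hT hf hδ hEK hE

end Comparison

lemma EReal.le_of_forall_pos_le_coe_add {a b : EReal} (h : ∀ η : ℝ, 0 < η → a ≤ η + b) :
    a ≤ b := by
  have hlim : Tendsto (fun η : ℝ => (η : EReal) + b) (𝓝 0) (𝓝 b) := by
    have hadd : ContinuousAt (fun p : EReal × EReal => p.1 + p.2) (((0 : ℝ) : EReal), b) :=
      EReal.continuousAt_add (by simp) (by simp)
    have := hadd.tendsto.comp
      ((continuous_coe_real_ereal.tendsto 0).prodMk_nhds tendsto_const_nhds)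
    rwa [EReal.coe_zero, zero_add] at this
  exact ge_of_tendsto (hlim.mono_left (nhdsWithin_le_nhds (s := Ioi 0)))
    (eventually_nhdsWithin_of_forall h)

lemma limsup_log_div_le_add {a b : ℕ → ℝ} {η : ℝ} (hη : 0 ≤ η) (ha : ∀ n, 0 < a n)
    (hab : ∀ n, a n ≤ Real.exp (n * η) * b n) :
    atTop.limsup (fun n : ℕ => ((Real.log (a n) / n : ℝ) : EReal))
      ≤ η + atTop.limsup fun n : ℕ => ((Real.log (b n) / n : ℝ) : EReal) := by
  have hpt : ∀ n : ℕ, Real.log (a n) / n ≤ η + Real.log (b n) / n := fun n => by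
    rcases n.eq_zero_or_pos with rfl | hn
    · simpa using hη -- both sides divide by `0`
    have hb : 0 < b n := pos_of_mul_pos_right ((ha n).trans_le (hab n)) (Real.exp_pos _).le
    have hlog := Real.log_le_log (ha n) (hab n)
    rw [Real.log_mul (Real.exp_pos _).ne' hb.ne', Real.log_exp] at hlog
    rw [div_le_iff₀ (by positivity), add_mul, div_mul_cancel₀ _ (by positivity)]
    linarith
  calc _ ≤ atTop.limsup
        ((fun _ => (η : EReal)) + fun n : ℕ => ((Real.log (b n) / n : ℝ) : EReal)) :=
        limsup_le_limsup <| Eventually.of_forall fun n => by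
          rw [Pi.add_apply, ← EReal.coe_add]
          exact EReal.coe_le_coe_iff.2 (hpt n)
    _ ≤ _ := (EReal.limsup_add_le (Or.inl (by simp)) (Or.inl (by simp))).trans_eq (by simp)

theorem stmt3_general [MetricSpace X] [CompactSpace X] [MeasurableSpace X] [BorelSpace X]
    (T : X ≃ₜ X) (f : C(X, ℝ)) (K : ℕ → Set X)
    (hKne : ∀ n, (K n).Nonempty) :
    (⨆ (δ : ℝ) (_ : 0 < δ), atTop.limsup fun n : ℕ =>
        ((Real.log (sepPn ⇑T ⇑f n δ (K n)) / n : ℝ) : EReal)) =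
      ⨆ (𝒰 : Finset (Set X)) (_ : IsOpenCover 𝒰), atTop.limsup fun n : ℕ =>
        ((Real.log (covPn ⇑T ⇑f 𝒰 n (K n)) / n : ℝ) : EReal) := by
  apply le_antisymm
  · refine iSup₂_le fun δ hδ => ?_
    obtain ⟨𝒰, h𝒰, h𝒰δ⟩ := exists_isOpenCover_dist_le (X := X) hδ
    refine le_iSup₂_of_le 𝒰 h𝒰 ?_
    simpa using limsup_log_div_le_add le_rfl
      (fun n => sepPn_pos T.continuous f.continuous hδ (hKne n))
      (fun n => by simpa using sepPn_le_covPn T.measurable f.continuous h𝒰 h𝒰δ n (K n))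
  · refine iSup₂_le fun 𝒰 h𝒰 => EReal.le_of_forall_pos_le_coe_add fun η hη => ?_
    obtain ⟨δ, hδ, hcov⟩ := covPn_le_exp_mul_sepPn T.continuous f.continuous h𝒰 hη
    refine (limsup_log_div_le_add hη.le
      (fun n => covPn_pos T.measurable f.continuous h𝒰 (hKne n)) fun n => hcov n (K n)).trans ?_
    gcongr
    exact le_iSup₂_of_le (f := fun (δ : ℝ) (_ : 0 < δ) => atTop.limsup fun n : ℕ =>
      ((Real.log (sepPn ⇑T ⇑f n δ (K n)) / n : ℝ) : EReal)) δ hδ le_rfl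

/-- For a TDS `(X,T)`, `f ∈ C(X,ℝ)` and a sequence of nonempty
closed subsets `K_n`, `lim_{δ→0} limsup_n (1/n) log P_n(T,f,δ,K_n)` equals
`sup_𝒰 limsup_n (1/n) log P_n(T,f,𝒰,K_n)` over finite open covers `𝒰`. -/
theorem stmt3 [MetricSpace X] [CompactSpace X] [MeasurableSpace X] [BorelSpace X]
    (T : X ≃ₜ X) (f : C(X, ℝ)) (K : ℕ → Set X)
    (hKne : ∀ n, (K n).Nonempty) (hKcl : ∀ n, IsClosed (K n)) :
    (⨆ (δ : ℝ) (_ : 0 < δ), atTop.limsup fun n : ℕ =>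
        ((Real.log (sepPn ⇑T ⇑f n δ (K n)) / n : ℝ) : EReal)) =
      ⨆ (𝒰 : Finset (Set X)) (_ : IsOpenCover 𝒰), atTop.limsup fun n : ℕ =>
        ((Real.log (covPn ⇑T ⇑f 𝒰 n (K n)) / n : ℝ) : EReal) :=
  stmt3_general T f K hKne
end
end

section
/- Let X be a compact metric space, T : X → X a surjective continuous map, and f ∈ C(X,ℝ). Then for each finite open cover 𝒰 of X, each compact subset K of X, and all n, m ∈ ℕ, P_{n+m}(T,f,𝒰,K) ≤ P_m(T,f,𝒰,K) · P_n(T,f∘T^m,T^{-m}𝒰,K), where T^{-m}𝒰 = { T^{-m}U : U ∈ 𝒰 }. -/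
open Filter Set Topology MeasureTheory

noncomputable section

variable {X : Type*}

/-!
Given Borel covers `𝒱₁` refining `𝒰_0^{m-1}` and `𝒱₂` refining `(T^{-m}𝒰)_0^{n-1}`, the cover
`{V₁ ∩ V₂}` refines `𝒰_0^{m+n-1}`. Since `f_{m+n} = f_m + (f ∘ Tᵐ)_n`, the supremum of
`exp f_{m+n}` over `V₁ ∩ V₂ ∩ K` is at most the product of the suprema over `V₁ ∩ K` and `V₂ ∩ K`,
so the sum for `{V₁ ∩ V₂}` is at most the product of the two sums; taking infima gives the claim.
Compactness of `K` keeps these suprema finite (`Real.sSup` of an unbounded set is `0`).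
-/

lemma birk_add (T : X → X) (f : X → ℝ) (m n : ℕ) (x : X) :
    birk T f (m + n) x = birk T f m x + birk T (fun y => f (T^[m] y)) n x := by
  simp only [birk, Finset.sum_range_add, Function.iterate_add_apply]

lemma continuous_birk [TopologicalSpace X] {T : X → X} (hT : Continuous T) {f : X → ℝ}
    (hf : Continuous f) (k : ℕ) : Continuous (birk T f k) :=
  continuous_finsetSum _ fun j _ => hf.comp (hT.iterate j)

def covWeight (T : X → X) (f : X → ℝ) (k : ℕ) (K V : Set X) : ℝ :=
  sSup ((fun x => Real.exp (birk T f k x)) '' (V ∩ K))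

lemma covWeight_nonneg (T : X → X) (f : X → ℝ) (k : ℕ) (K V : Set X) :
    0 ≤ covWeight T f k K V :=
  Real.sSup_nonneg <| by
    rintro _ ⟨x, -, rfl⟩
    positivity

lemma exp_birk_le_covWeight [TopologicalSpace X] {T : X → X} (hT : Continuous T) {f : X → ℝ}
    (hf : Continuous f) {K : Set X} (hK : IsCompact K) {k : ℕ} {V : Set X} {x : X}
    (hx : x ∈ V ∩ K) : Real.exp (birk T f k x) ≤ covWeight T f k K V := by
  have hbdd : BddAbove ((fun x => Real.exp (birk T f k x)) '' K) :=
    (hK.image (Real.continuous_exp.comp (continuous_birk hT hf k))).bddAbove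
  exact le_csSup (hbdd.mono (image_mono inter_subset_right)) ⟨x, hx, rfl⟩

lemma covWeight_inter_le [TopologicalSpace X] {T : X → X} (hT : Continuous T) {f : X → ℝ}
    (hf : Continuous f) {K : Set X} (hK : IsCompact K) (m n : ℕ) (V₁ V₂ : Set X) :
    covWeight T f (m + n) K (V₁ ∩ V₂) ≤
      covWeight T f m K V₁ * covWeight T (fun x => f (T^[m] x)) n K V₂ := by
  refine Real.sSup_le ?_ (mul_nonneg (covWeight_nonneg ..) (covWeight_nonneg ..))
  rintro _ ⟨x, ⟨⟨hx₁, hx₂⟩, hxK⟩, rfl⟩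
  dsimp only
  rw [birk_add, Real.exp_add]
  exact mul_le_mul (exp_birk_le_covWeight hT hf hK ⟨hx₁, hxK⟩)
    (exp_birk_le_covWeight hT (hf.comp (hT.iterate m)) hK ⟨hx₂, hxK⟩) (Real.exp_nonneg _)
    (covWeight_nonneg ..)

lemma IsOpenCover.isBorelCover [TopologicalSpace X] [MeasurableSpace X] [OpensMeasurableSpace X]
    {𝒰 : Finset (Set X)} (h𝒰 : IsOpenCover 𝒰) : IsBorelCover 𝒰 :=
  ⟨fun U hU => (h𝒰.1 U hU).measurableSet, h𝒰.2⟩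

lemma IsBorelCover.image_preimage [MeasurableSpace X] [DecidableEq (Set X)] {φ : X → X}
    (hφ : Measurable φ) {𝒰 : Finset (Set X)} (h𝒰 : IsBorelCover 𝒰) :
    IsBorelCover (𝒰.image (φ ⁻¹' ·)) := by
  refine ⟨?_, eq_univ_of_forall fun x => ?_⟩
  · simp only [Finset.mem_image]
    rintro _ ⟨U, hU, rfl⟩
    exact hφ (h𝒰.1 U hU)
  · obtain ⟨U, hU, hxU⟩ := mem_sUnion.1 (h𝒰.2.symm ▸ mem_univ (φ x))
    exact ⟨φ ⁻¹' U, Finset.mem_coe.2 (Finset.mem_image_of_mem _ hU), hxU⟩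

lemma IsBorelCover.join [MeasurableSpace X] [DecidableEq (Set X)] {𝒱₁ 𝒱₂ : Finset (Set X)}
    (h₁ : IsBorelCover 𝒱₁) (h₂ : IsBorelCover 𝒱₂) :
    IsBorelCover (Finset.image₂ (· ∩ ·) 𝒱₁ 𝒱₂) := by
  refine ⟨?_, eq_univ_of_forall fun x => ?_⟩
  · simp only [Finset.mem_image₂]
    rintro _ ⟨V₁, hV₁, V₂, hV₂, rfl⟩
    exact (h₁.1 V₁ hV₁).inter (h₂.1 V₂ hV₂)
  · obtain ⟨V₁, hV₁, hx₁⟩ := mem_sUnion.1 (h₁.2.symm ▸ mem_univ x)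
    obtain ⟨V₂, hV₂, hx₂⟩ := mem_sUnion.1 (h₂.2.symm ▸ mem_univ x)
    exact ⟨V₁ ∩ V₂, Finset.mem_coe.2 (Finset.mem_image₂_of_mem hV₁ hV₂), hx₁, hx₂⟩

lemma exists_isBorelCover_refinesIter [MeasurableSpace X] {T : X → X} (hT : Measurable T)
    {𝒲 : Finset (Set X)} (h𝒲 : IsBorelCover 𝒲) (k : ℕ) :
    ∃ 𝒱, IsBorelCover 𝒱 ∧ RefinesIter T 𝒲 k 𝒱 := by
  classical
  refine ⟨Finset.univ.image fun g : Fin k → 𝒲 => ⋂ i : Fin k, T^[i] ⁻¹' (g i : Set X), ⟨?_, ?_⟩, ?_⟩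
  · simp only [Finset.mem_image]
    rintro _ ⟨g, -, rfl⟩
    exact MeasurableSet.iInter fun i => (hT.iterate _) (h𝒲.1 _ (g i).2)
  · refine eq_univ_of_forall fun x => ?_
    choose g hg using fun i : Fin k => mem_sUnion.1 (h𝒲.2.symm ▸ mem_univ (T^[i] x))
    let g' : Fin k → 𝒲 := fun i => ⟨g i, (hg i).1⟩
    exact ⟨_, Finset.mem_coe.2 (Finset.mem_image_of_mem _ (Finset.mem_univ g')),
      mem_iInter.2 fun i => (hg i).2⟩
  · intro V hV
    obtain ⟨g, -, rfl⟩ := Finset.mem_image.1 hV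
    exact ⟨fun i => g i, fun i => (g i).2, subset_rfl⟩

lemma RefinesIter.join [DecidableEq (Set X)] {T : X → X} {𝒰 𝒰' 𝒱₁ 𝒱₂ : Finset (Set X)}
    {m n : ℕ} (h𝒰' : ∀ W ∈ 𝒰', ∃ U ∈ 𝒰, T^[m] ⁻¹' U = W) (h₁ : RefinesIter T 𝒰 m 𝒱₁)
    (h₂ : RefinesIter T 𝒰' n 𝒱₂) :
    RefinesIter T 𝒰 (m + n) (Finset.image₂ (· ∩ ·) 𝒱₁ 𝒱₂) := by
  simp only [RefinesIter, Finset.mem_image₂]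
  rintro _ ⟨V₁, hV₁, V₂, hV₂, rfl⟩
  obtain ⟨g₁, hg₁, hV₁g⟩ := h₁ V₁ hV₁
  obtain ⟨g₂, hg₂, hV₂g⟩ := h₂ V₂ hV₂
  choose U hU hUg using fun i => h𝒰' (g₂ i) (hg₂ i)
  refine ⟨Fin.append g₁ U, Fin.addCases (by simpa using hg₁) (by simpa using hU), ?_⟩
  rintro x ⟨hx₁, hx₂⟩
  refine mem_iInter.2 (Fin.addCases (fun i => ?_) fun i => ?_)
  · simpa using mem_iInter.1 (hV₁g hx₁) i
  · have hxi : T^[i] x ∈ T^[m] ⁻¹' U i := hUg i ▸ mem_iInter.1 (hV₂g hx₂) i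
    simpa [Function.iterate_add_apply] using hxi

/-- The set whose infimum is, by definition, `covPn T f 𝒰 k K`. -/
def covSums [MeasurableSpace X] (T : X → X) (f : X → ℝ) (𝒰 : Finset (Set X)) (k : ℕ)
    (K : Set X) : Set ℝ :=
  { r | ∃ 𝒱 : Finset (Set X), IsBorelCover 𝒱 ∧ RefinesIter T 𝒰 k 𝒱 ∧
    r = ∑ V ∈ 𝒱, covWeight T f k K V }

section covSums

variable [MeasurableSpace X] {T : X → X} {f : X → ℝ} {𝒰 : Finset (Set X)} {k : ℕ} {K : Set X}

lemma nonneg_of_mem_covSums {r : ℝ} (hr : r ∈ covSums T f 𝒰 k K) : 0 ≤ r := by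
  obtain ⟨𝒱, -, -, rfl⟩ := hr
  exact Finset.sum_nonneg fun V _ => covWeight_nonneg ..

lemma covSums_nonempty (hT : Measurable T) (h𝒰 : IsBorelCover 𝒰) :
    (covSums T f 𝒰 k K).Nonempty :=
  let ⟨𝒱, h𝒱, hR⟩ := exists_isBorelCover_refinesIter hT h𝒰 k
  ⟨_, 𝒱, h𝒱, hR, rfl⟩

end covSums

lemma covPn_add_le_mul_of_mem [TopologicalSpace X] [MeasurableSpace X] {T : X → X}
    (hT : Continuous T) {f : X → ℝ} (hf : Continuous f) {K : Set X} (hK : IsCompact K)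
    {𝒰 𝒰' : Finset (Set X)} {m n : ℕ} (h𝒰' : ∀ W ∈ 𝒰', ∃ U ∈ 𝒰, T^[m] ⁻¹' U = W)
    {r₁ r₂ : ℝ} (hr₁ : r₁ ∈ covSums T f 𝒰 m K)
    (hr₂ : r₂ ∈ covSums T (fun x => f (T^[m] x)) 𝒰' n K) :
    covPn T f 𝒰 (m + n) K ≤ r₁ * r₂ := by
  classical
  obtain ⟨𝒱₁, hB₁, hR₁, rfl⟩ := hr₁
  obtain ⟨𝒱₂, hB₂, hR₂, rfl⟩ := hr₂
  calc covPn T f 𝒰 (m + n) K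
      ≤ ∑ V ∈ Finset.image₂ (· ∩ ·) 𝒱₁ 𝒱₂, covWeight T f (m + n) K V :=
        csInf_le ⟨0, fun _ => nonneg_of_mem_covSums⟩
          ⟨_, hB₁.join hB₂, RefinesIter.join h𝒰' hR₁ hR₂, rfl⟩
    _ ≤ ∑ p ∈ 𝒱₁ ×ˢ 𝒱₂, covWeight T f (m + n) K (p.1 ∩ p.2) :=
        Finset.sum_image_le_of_nonneg fun _ _ => covWeight_nonneg ..
    _ ≤ ∑ p ∈ 𝒱₁ ×ˢ 𝒱₂,
          covWeight T f m K p.1 * covWeight T (fun x => f (T^[m] x)) n K p.2 :=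
        Finset.sum_le_sum fun p _ => covWeight_inter_le hT hf hK m n p.1 p.2
    _ = _ := by rw [Finset.sum_product, Finset.sum_mul_sum]

lemma le_sInf_mul_sInf {c : ℝ} {s t : Set ℝ} (hs : s.Nonempty) (ht : t.Nonempty)
    (hs0 : ∀ x ∈ s, 0 ≤ x) (ht0 : ∀ y ∈ t, 0 ≤ y) (h : ∀ x ∈ s, ∀ y ∈ t, c ≤ x * y) :
    c ≤ sInf s * sInf t := by
  have le_sInf_mul : ∀ x ∈ s, c ≤ sInf t * x := fun x hx => by
    rw [mul_comm, ← smul_eq_mul, ← Real.sInf_smul_of_nonneg (hs0 x hx)]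
    refine le_csInf ht.smul_set ?_
    rintro _ ⟨y, hy, rfl⟩
    exact h x hx y hy
  rw [mul_comm, ← smul_eq_mul, ← Real.sInf_smul_of_nonneg (Real.sInf_nonneg ht0)]
  refine le_csInf hs.smul_set ?_
  rintro _ ⟨x, hx, rfl⟩
  exact le_sInf_mul x hx

theorem stmt15_general [MetricSpace X] [MeasurableSpace X] [BorelSpace X]
    (T : X → X) (hT : Continuous T) (f : C(X, ℝ))
    (𝒰 : Finset (Set X)) (h𝒰 : IsOpenCover 𝒰) (K : Set X) (hK : IsCompact K)
    (n m : ℕ) :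
    covPn T ⇑f 𝒰 (n + m) K ≤
      covPn T ⇑f 𝒰 m K *
        covPn T (fun x => f (T^[m] x))
          (@Finset.image _ _ (Classical.decEq _) (fun U => T^[m] ⁻¹' U) 𝒰) n K := by
  have h𝒰' := h𝒰.isBorelCover.image_preimage (hT.iterate m).measurable
  rw [add_comm n m]
  exact le_sInf_mul_sInf (covSums_nonempty hT.measurable h𝒰.isBorelCover)
    (covSums_nonempty hT.measurable h𝒰') (fun _ => nonneg_of_mem_covSums)
    (fun _ => nonneg_of_mem_covSums) fun _ hr₁ _ hr₂ =>
      covPn_add_le_mul_of_mem hT f.continuous hK (fun _ => Finset.mem_image.1) hr₁ hr₂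

/-- For a surjective continuous `T` on a compact metric space,
`f ∈ C(X,ℝ)`, a finite open cover `𝒰` and a compact `K ⊆ X`:
`P_{n+m}(T,f,𝒰,K) ≤ P_m(T,f,𝒰,K) · P_n(T, f∘Tᵐ, T^{-m}𝒰, K)`. -/
theorem stmt15 [MetricSpace X] [CompactSpace X] [MeasurableSpace X] [BorelSpace X]
    (T : X → X) (hT : Continuous T) (hTs : Function.Surjective T) (f : C(X, ℝ))
    (𝒰 : Finset (Set X)) (h𝒰 : IsOpenCover 𝒰) (K : Set X) (hK : IsCompact K)
    (n m : ℕ) :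
    covPn T ⇑f 𝒰 (n + m) K ≤
      covPn T ⇑f 𝒰 m K *
        covPn T (fun x => f (T^[m] x))
          (@Finset.image _ _ (Classical.decEq _) (fun U => T^[m] ⁻¹' U) 𝒰) n K :=
  stmt15_general T hT f 𝒰 h𝒰 K hK n m
end
end

section
/- Let X be a compact metric space, T : X → X a surjective continuous map, let (X̃,T̃) be the inverse limit of (X,T), f ∈ C(X,ℝ), and π₁ : X̃ → X the projection to the first coordinate. Then for any sequence (K_n)_{n≥1} of non-empty closed subsets of X̃, lim_{δ→0} limsup_{n→∞} (1/n) log P_n(T̃,f∘π₁,δ,K_n) = lim_{δ→0} limsup_{n→∞} (1/n) log P_n(T,f,δ,π₁(K_n)). -/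
open Filter Set Topology

noncomputable section

variable {X : Type*}

/-- `P_n(S,g,δ,K)` with respect to an explicit distance function `ρ`:
the supremum of `∑_{z∈E} exp g_n(z)` over subsets `E ⊆ K` that are
`(n,δ)`-separated for `S` with respect to `ρ`. -/
def sepPnD {Y : Type*} (ρ : Y → Y → ℝ) (S : Y → Y) (g : Y → ℝ) (n : ℕ) (δ : ℝ)
    (K : Set Y) : ℝ :=
  sSup { r : ℝ | ∃ E : Finset Y, ↑E ⊆ K ∧
    (∀ x ∈ E, ∀ y ∈ E, x ≠ y → ∃ i < n, δ < ρ (S^[i] x) (S^[i] y)) ∧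
    r = ∑ x ∈ E, Real.exp (∑ j ∈ Finset.range n, g (S^[j] x)) }

/-- The shift homeomorphism `T̃(x₁,x₂,…) = (T x₁, x₁, x₂, …)` on the inverse
limit `X̃ = {(x₁,x₂,…) : T x_{i+1} = x_i}` of `(X,T)` (indexed from `0`). -/
def shiftMap (T : X → X) (x : {p : ℕ → X // ∀ i, T (p (i + 1)) = p i}) :
    {p : ℕ → X // ∀ i, T (p (i + 1)) = p i} :=
  ⟨fun i => match i with
    | 0 => T (x.1 0)
    | k + 1 => x.1 k,
   fun i => match i with
    | 0 => rfl
    | k + 1 => x.2 k⟩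

/-!
The shift `T̃` factors onto `T` through `π₁`, and `d_T(x̃, ỹ) ≥ d(x₁, y₁) / 2`; lifting an
`(n, δ)`-separated subset of `π₁(K_n)` to `K_n` therefore gives an `(n, δ/2)`-separated set for `T̃`
with the same weights.

Conversely, `d_T(T̃ⁱx̃, T̃ⁱỹ)` is at most the largest distance `d(Tʲx₁, Tʲy₁)`, `j ≤ i`, plus
`d_T(x̃, ỹ)`. So in an `(n, δ)`-separated set for `T̃`, the points whose first coordinates follow a
given one within `δ/4` up to time `n` are pairwise `δ/2`-apart for `d_T`, and there are at most `N`
of them, `N` independent of `n` by total boundedness. Greedily keeping a point of maximal weight and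
discarding its neighbours yields an `(n, δ/4)`-separated subset of `π₁(K_n)` carrying at least `1/N`
of the weight. Constant factors disappear after `(1/n) log`.
-/

open Function

section SeparatedSums

variable {Y : Type*} {ρ : Y → Y → ℝ} {S : Y → Y} {g : Y → ℝ} {n : ℕ} {δ : ℝ} {K : Set Y}

def IsOrbitSeparated (ρ : Y → Y → ℝ) (S : Y → Y) (n : ℕ) (δ : ℝ) (E : Finset Y) : Prop :=
  (E : Set Y).Pairwise fun x y => ∃ i < n, δ < ρ (S^[i] x) (S^[i] y)

def separatedSums (ρ : Y → Y → ℝ) (S : Y → Y) (g : Y → ℝ) (n : ℕ) (δ : ℝ) (K : Set Y) :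
    Set ℝ :=
  {r | ∃ E : Finset Y, ↑E ⊆ K ∧ IsOrbitSeparated ρ S n δ E ∧
    r = ∑ x ∈ E, Real.exp (birkhoffSum S g n x)}

theorem sum_le_sepPnD (hbdd : BddAbove (separatedSums ρ S g n δ K)) {E : Finset Y}
    (hEK : ↑E ⊆ K) (hE : IsOrbitSeparated ρ S n δ E) :
    ∑ x ∈ E, Real.exp (birkhoffSum S g n x) ≤ sepPnD ρ S g n δ K :=
  le_csSup hbdd ⟨E, hEK, hE, rfl⟩

theorem sepPnD_nonneg (hbdd : BddAbove (separatedSums ρ S g n δ K)) :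
    0 ≤ sepPnD ρ S g n δ K := by
  simpa using sum_le_sepPnD hbdd (E := ∅) (by simp) (by simp [IsOrbitSeparated])

theorem sepPnD_pos (hbdd : BddAbove (separatedSums ρ S g n δ K)) (hK : K.Nonempty) :
    0 < sepPnD ρ S g n δ K := by
  obtain ⟨z, hz⟩ := hK
  refine (Real.exp_pos (birkhoffSum S g n z)).trans_le ?_
  simpa using sum_le_sepPnD hbdd (E := {z}) (by simpa using hz) (by simp [IsOrbitSeparated])

theorem sepPnD_le {c : ℝ} (hc : 0 ≤ c)
    (h : ∀ E : Finset Y, ↑E ⊆ K → IsOrbitSeparated ρ S n δ E →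
      ∑ x ∈ E, Real.exp (birkhoffSum S g n x) ≤ c) :
    sepPnD ρ S g n δ K ≤ c :=
  Real.sSup_le (by rintro _ ⟨E, hEK, hE, rfl⟩; exact h E hEK hE) hc

theorem bddAbove_separatedSums (hg : BddAbove (range g)) {N : ℕ}
    (hN : ∀ E, IsOrbitSeparated ρ S n δ E → E.card ≤ N) :
    BddAbove (separatedSums ρ S g n δ K) := by
  obtain ⟨M, hM⟩ := hg
  have hexp : ∀ x, Real.exp (birkhoffSum S g n x) ≤ Real.exp (n * M) := fun x => by
    gcongr
    simpa [birkhoffSum] using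
      Finset.sum_le_card_nsmul (Finset.range n) _ M fun k _ => hM (mem_range_self (S^[k] x))
  refine ⟨N * Real.exp (n * M), ?_⟩
  rintro _ ⟨E, -, hE, rfl⟩
  calc ∑ x ∈ E, Real.exp (birkhoffSum S g n x) ≤ E.card * Real.exp (n * M) := by
        simpa using Finset.sum_le_card_nsmul E _ _ fun x _ => hexp x
    _ ≤ N * Real.exp (n * M) := by gcongr; exact_mod_cast hN E hE

def HasFiniteCoding (ρ : Y → Y → ℝ) (ε : ℝ) : Prop :=
  ∃ (k : ℕ) (c : Y → Fin k), ∀ x y, c x = c y → ρ x y ≤ ε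

theorem HasFiniteCoding.exists_card_le_pow (h : HasFiniteCoding ρ δ) :
    ∃ k : ℕ, ∀ (S : Y → Y) (n : ℕ) (E : Finset Y), IsOrbitSeparated ρ S n δ E → E.card ≤ k ^ n := by
  obtain ⟨k, c, hc⟩ := h
  refine ⟨k, fun S n E hE => ?_⟩
  have hinj : InjOn (fun x (i : Fin n) => c (S^[i] x)) E := by
    intro x hx y hy hxy
    by_contra hne
    obtain ⟨i, hi, hsep⟩ := hE hx hy hne
    exact (hc _ _ (congrFun hxy ⟨i, hi⟩)).not_gt hsep
  simpa using Finset.card_le_card_of_injOn _ (fun _ _ => Finset.mem_univ _) hinj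

theorem HasFiniteCoding.bddAbove_separatedSums (h : HasFiniteCoding ρ δ)
    (hg : BddAbove (range g)) : BddAbove (separatedSums ρ S g n δ K) :=
  have ⟨_, hk⟩ := h.exists_card_le_pow
  _root_.bddAbove_separatedSums hg (hk S n)

end SeparatedSums

theorem hasFiniteCoding_dist [PseudoMetricSpace X] [CompactSpace X] {ε : ℝ} (hε : 0 < ε) :
    HasFiniteCoding (dist : X → X → ℝ) ε := by
  obtain ⟨t, -, ht, hcover⟩ := finite_cover_balls_of_compact (isCompact_univ (X := X)) (half_pos hε)
  have hcenter : ∀ x : X, ∃ z : t, dist x z < ε / 2 := fun x => by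
    simpa using hcover (mem_univ x)
  choose center hcenter using hcenter
  have : Finite t := ht
  obtain ⟨k, ⟨e⟩⟩ := Finite.exists_equiv_fin t
  refine ⟨k, e ∘ center, fun x y hxy => ?_⟩
  have hxy : center x = center y := e.injective hxy
  calc dist x y ≤ dist x (center x) + dist y (center y) := by
        rw [hxy]; exact dist_triangle_right _ _ _
    _ ≤ ε := by linarith [hcenter x, hcenter y]

theorem Finset.exists_subset_pairwise_not_and_sum_le {α : Type*} {R : α → α → Prop}
    (hRr : ∀ x, R x x) (hRs : ∀ x y, R x y → R y x) {w : α → ℝ} (hw : ∀ x, 0 ≤ w x) (N : ℕ)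
    (E : Finset α) (hN : ∀ e ∈ E, ∀ B ⊆ E, (∀ z ∈ B, R z e) → B.card ≤ N) :
    ∃ E' ⊆ E, (E' : Set α).Pairwise (¬ R · ·) ∧ ∑ x ∈ E, w x ≤ N * ∑ x ∈ E', w x := by
  classical
  induction E using Finset.strongInduction with
  | H E ih =>
  rcases E.eq_empty_or_nonempty with rfl | hne
  · exact ⟨∅, subset_refl _, by simp, by simp⟩
  -- greedily keep a point of maximal weight and discard its `R`-neighbourhood
  obtain ⟨e, heE, hmax⟩ := E.exists_max_image w hne
  set B := E.filter fun z => R z e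
  have hBE : B ⊆ E := filter_subset _ _
  obtain ⟨E', hE'E, hE'R, hsum⟩ := ih (E \ B) (sdiff_ssubset hBE ⟨e, mem_filter.2 ⟨heE, hRr e⟩⟩)
    fun e' he' C hC hCR => hN e' (sdiff_subset he') C (hC.trans sdiff_subset) hCR
  have hfar : ∀ x ∈ E', ¬ R x e := fun x hx hxe =>
    (mem_sdiff.1 (hE'E hx)).2 (mem_filter.2 ⟨(mem_sdiff.1 (hE'E hx)).1, hxe⟩)
  have he : e ∉ E' := fun h => hfar e h (hRr e)
  refine ⟨insert e E', insert_subset heE (hE'E.trans sdiff_subset), ?_, ?_⟩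
  · rw [coe_insert]
    exact hE'R.insert fun x hx _ => ⟨fun h => hfar x hx (hRs _ _ h), hfar x hx⟩
  have hB : ∑ x ∈ B, w x ≤ N * w e :=
    calc ∑ x ∈ B, w x ≤ B.card * w e := by
          simpa using sum_le_card_nsmul B w (w e) fun x hx => hmax x (hBE hx)
      _ ≤ N * w e := by
          gcongr
          · exact hw e
          · exact_mod_cast hN e heE B hBE fun z hz => (mem_filter.1 hz).2
  calc ∑ x ∈ E, w x = ∑ x ∈ E \ B, w x + ∑ x ∈ B, w x := (sum_sdiff hBE).symm
    _ ≤ N * ∑ x ∈ E', w x + N * w e := add_le_add hsum hB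
    _ = N * ∑ x ∈ insert e E', w x := by rw [sum_insert he]; ring

section Factor

variable {Y Z : Type*} {S : Y → Y} {T : Z → Z} {π : Y → Z}

theorem Function.Semiconj.birkhoffSum_comp {M : Type*} [AddCommMonoid M] (h : Semiconj π S T)
    (g : Z → M) (n : ℕ) (x : Y) : birkhoffSum S (g ∘ π) n x = birkhoffSum T g n (π x) :=
  Finset.sum_congr rfl fun k _ => congrArg g ((h.iterate_right k).eq x)

theorem sepPnD_image_le {ρY : Y → Y → ℝ} {ρZ : Z → Z → ℝ} {δ δ' : ℝ} (h : Semiconj π S T)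
    (hρ : ∀ a b, δ < ρZ (π a) (π b) → δ' < ρY a b) (g : Z → ℝ) (n : ℕ) (K : Set Y)
    (hbdd : BddAbove (separatedSums ρY S (g ∘ π) n δ' K)) :
    sepPnD ρZ T g n δ (π '' K) ≤ sepPnD ρY S (g ∘ π) n δ' K := by
  classical
  refine sepPnD_le (sepPnD_nonneg hbdd) fun E hEK hE => ?_
  obtain ⟨L, hLK, hLinj, rfl⟩ := Finset.exists_subset_injOn_image_eq_of_surjOn K E hEK
  rw [Finset.sum_image hLinj]
  simp_rw [← h.birkhoffSum_comp]
  refine sum_le_sepPnD hbdd hLK fun x hx y hy hxy => ?_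
  obtain ⟨i, hi, hsep⟩ := hE (Finset.mem_image_of_mem π hx) (Finset.mem_image_of_mem π hy)
    (hLinj.ne hx hy hxy)
  refine ⟨i, hi, hρ _ _ ?_⟩
  rwa [(h.iterate_right i).eq, (h.iterate_right i).eq]

theorem sum_le_sepPnD_image [PseudoMetricSpace Z] {g : Z → ℝ} {n : ℕ} {δ : ℝ} (hδ : 0 ≤ δ)
    {K : Set Y} (hbdd : BddAbove (separatedSums dist T g n δ (π '' K))) {E : Finset Y}
    (hEK : ↑E ⊆ K)
    (hE : (E : Set Y).Pairwise fun x y => ∃ i < n, δ < dist (T^[i] (π x)) (T^[i] (π y))) :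
    ∑ x ∈ E, Real.exp (birkhoffSum T g n (π x)) ≤ sepPnD dist T g n δ (π '' K) := by
  classical
  have hinj : InjOn π E := fun x hx y hy hxy => by
    by_contra hne
    obtain ⟨i, -, hsep⟩ := hE hx hy hne
    rw [hxy, dist_self] at hsep
    exact hsep.not_ge hδ
  rw [← Finset.sum_image (f := fun z => Real.exp (birkhoffSum T g n z)) hinj]
  refine sum_le_sepPnD hbdd (by simpa using image_mono hEK) ?_
  rintro _ hx' _ hy' hxy
  obtain ⟨x, hx, rfl⟩ := Finset.mem_image.1 hx'
  obtain ⟨y, hy, rfl⟩ := Finset.mem_image.1 hy'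
  exact hE hx hy fun h => hxy (h ▸ rfl)

end Factor

theorem limsup_log_div_le_of_le_mul {a b : ℕ → ℝ} {C : ℝ} (ha : ∀ n, 0 < a n)
    (hb : ∀ n, 0 < b n) (hab : ∀ n, a n ≤ C * b n) :
    atTop.limsup (fun n : ℕ => ((Real.log (a n) / n : ℝ) : EReal)) ≤
      atTop.limsup (fun n : ℕ => ((Real.log (b n) / n : ℝ) : EReal)) := by
  have hC : 0 < C := pos_of_mul_pos_left ((ha 0).trans_le (hab 0)) (hb 0).le
  set u : ℕ → EReal := fun n => ((Real.log C / n : ℝ) : EReal)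
  have hu : atTop.limsup u = 0 := by
    have := tendsto_const_div_atTop_nhds_zero_nat (Real.log C)
    exact ((continuous_coe_real_ereal.tendsto 0).comp this).limsup_eq
  calc atTop.limsup (fun n : ℕ => ((Real.log (a n) / n : ℝ) : EReal))
      ≤ atTop.limsup (u + fun n : ℕ => ((Real.log (b n) / n : ℝ) : EReal)) := by
        refine limsup_le_limsup (Eventually.of_forall fun n => ?_)
        simp only [u, Pi.add_apply, ← EReal.coe_add, EReal.coe_le_coe_iff, ← add_div]
        gcongr
        rw [← Real.log_mul hC.ne' (hb n).ne']
        exact Real.log_le_log (ha n) (hab n)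
    _ ≤ atTop.limsup u + atTop.limsup (fun n : ℕ => ((Real.log (b n) / n : ℝ) : EReal)) :=
        EReal.limsup_add_le (.inl (by simp [hu])) (.inl (by simp [hu]))
    _ = _ := by rw [hu, zero_add]

theorem iSup_limsup_log_div_le {F G : ℝ → ℕ → ℝ} (hF : ∀ δ > 0, ∀ n, 0 < F δ n)
    (hG : ∀ δ > 0, ∀ n, 0 < G δ n) (h : ∀ δ > 0, ∃ δ' > 0, ∃ C : ℝ, ∀ n, F δ n ≤ C * G δ' n) :
    ⨆ (δ : ℝ) (_ : 0 < δ), atTop.limsup (fun n : ℕ => ((Real.log (F δ n) / n : ℝ) : EReal)) ≤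
      ⨆ (δ : ℝ) (_ : 0 < δ), atTop.limsup (fun n : ℕ => ((Real.log (G δ n) / n : ℝ) : EReal)) :=
  iSup₂_le fun δ hδ =>
    have ⟨δ', hδ', _, hC⟩ := h δ hδ
    (limsup_log_div_le_of_le_mul (hF δ hδ) (hG δ' hδ') hC).trans (le_iSup₂_of_le δ' hδ' le_rfl)

section SeqDist

variable [PseudoMetricSpace X]

def seqDist (a b : ℕ → X) : ℝ := ∑' i, dist (a i) (b i) / 2 ^ (i + 1)

theorem sum_range_div_two_pow_succ_le {c : ℝ} (hc : 0 ≤ c) (m : ℕ) :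
    ∑ k ∈ Finset.range m, c / 2 ^ (k + 1) ≤ c :=
  calc ∑ k ∈ Finset.range m, c / 2 ^ (k + 1) = c / 2 * ∑ k ∈ Finset.range m, (1 / 2 : ℝ) ^ k := by
        rw [Finset.mul_sum]; congr 1; ext k; rw [one_div_pow]; ring
    _ ≤ c / 2 * 2 := by gcongr; exact sum_geometric_two_le m
    _ = c := by ring

theorem seqDist_nonneg (a b : ℕ → X) : 0 ≤ seqDist a b :=
  tsum_nonneg fun i => by positivity

variable [BoundedSpace X]

theorem dist_le_diam_univ (x y : X) : dist x y ≤ Metric.diam (univ : Set X) :=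
  Metric.dist_le_diam_of_mem (Bornology.isBounded_univ.2 ‹_›) (mem_univ x) (mem_univ y)

theorem summable_dist_div_two_pow (a b : ℕ → X) :
    Summable fun i => dist (a i) (b i) / 2 ^ (i + 1) := by
  refine (summable_geometric_two.mul_left (Metric.diam (univ : Set X) / 2)).of_nonneg_of_le
    (fun i => by positivity) fun i => ?_
  rw [one_div_pow, mul_one_div, div_div, ← pow_succ']
  gcongr
  exact dist_le_diam_univ _ _

theorem seqDist_le_diam (a b : ℕ → X) : seqDist a b ≤ Metric.diam (univ : Set X) :=
  calc seqDist a b ≤ ∑' i : ℕ, Metric.diam (univ : Set X) / 2 / 2 ^ i := by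
        refine (summable_dist_div_two_pow a b).tsum_le_tsum (fun i => ?_)
          (summable_geometric_two.mul_left (Metric.diam (univ : Set X) / 2) |>.congr
            fun i => by rw [one_div_pow]; ring)
        rw [div_div, ← pow_succ']
        gcongr
        exact dist_le_diam_univ _ _
    _ = _ := tsum_geometric_two' _

theorem seqDist_eq_sum_add (a b : ℕ → X) (m : ℕ) :
    seqDist a b = ∑ k ∈ Finset.range m, dist (a k) (b k) / 2 ^ (k + 1)
      + seqDist (fun j => a (j + m)) (fun j => b (j + m)) / 2 ^ m := by
  rw [seqDist, ← (summable_dist_div_two_pow a b).sum_add_tsum_nat_add m, seqDist,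
    ← tsum_div_const]
  congr 2
  ext j
  rw [div_div, ← pow_add, add_right_comm]

theorem half_dist_le_seqDist (a b : ℕ → X) : dist (a 0) (b 0) / 2 ≤ seqDist a b := by
  rw [seqDist_eq_sum_add a b 1]
  have := seqDist_nonneg (fun j => a (j + 1)) (fun j => b (j + 1))
  simp only [Finset.range_one, Finset.sum_singleton, zero_add, pow_one]
  linarith [div_nonneg this zero_le_two]

theorem seqDist_le_of_forall_lt {a b : ℕ → X} {m : ℕ} {ε : ℝ} (hε : 0 ≤ ε)
    (h : ∀ k < m, dist (a k) (b k) ≤ ε) :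
    seqDist a b ≤ ε + seqDist (fun j => a (j + m)) (fun j => b (j + m)) / 2 ^ m := by
  rw [seqDist_eq_sum_add a b m]
  gcongr
  calc ∑ k ∈ Finset.range m, dist (a k) (b k) / 2 ^ (k + 1)
      ≤ ∑ k ∈ Finset.range m, ε / 2 ^ (k + 1) :=
        Finset.sum_le_sum fun k hk => by gcongr; exact h k (Finset.mem_range.1 hk)
    _ ≤ ε := sum_range_div_two_pow_succ_le hε m

end SeqDist

abbrev InverseLimit (T : X → X) := {p : ℕ → X // ∀ i, T (p (i + 1)) = p i}

section InverseLimit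

variable {T : X → X}

theorem semiconj_shiftMap : Semiconj (fun x : InverseLimit T => x.1 0) (shiftMap T) T :=
  fun _ => rfl

theorem shiftMap_iterate_apply_add (x : InverseLimit T) (i j : ℕ) :
    ((shiftMap T)^[i] x).1 (i + j) = x.1 j := by
  induction i with
  | zero => rw [zero_add]; rfl
  | succ i ih => rw [iterate_succ_apply', add_right_comm, ← ih]; rfl

theorem shiftMap_iterate_apply_of_le (x : InverseLimit T) {i k : ℕ} (h : k ≤ i) :
    ((shiftMap T)^[i] x).1 k = T^[i - k] (x.1 0) := by
  obtain ⟨l, rfl⟩ := Nat.exists_eq_add_of_le h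
  rw [iterate_add_apply, Nat.add_sub_cancel_left]
  exact (shiftMap_iterate_apply_add _ k 0).trans ((semiconj_shiftMap.iterate_right l).eq x)

variable [PseudoMetricSpace X]

theorem seqDist_shiftMap_iterate_le [BoundedSpace X] (x y : InverseLimit T) (i : ℕ) {β : ℝ}
    (h : ∀ j ≤ i, dist (T^[j] (x.1 0)) (T^[j] (y.1 0)) ≤ β) :
    seqDist ((shiftMap T)^[i] x).1 ((shiftMap T)^[i] y).1 ≤ β + seqDist x.1 y.1 := by
  have hβ : 0 ≤ β := dist_nonneg.trans (h 0 i.zero_le)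
  set tail := seqDist (fun j => x.1 (j + 1)) (fun j => y.1 (j + 1))
  have htail : 0 ≤ tail := seqDist_nonneg _ _
  have hhead : ∀ k < i + 1, dist (((shiftMap T)^[i] x).1 k) (((shiftMap T)^[i] y).1 k) ≤ β :=
    fun k hk => by
      rw [shiftMap_iterate_apply_of_le x (Nat.lt_succ_iff.1 hk),
        shiftMap_iterate_apply_of_le y (Nat.lt_succ_iff.1 hk)]
      exact h _ (Nat.sub_le i k)
  calc seqDist ((shiftMap T)^[i] x).1 ((shiftMap T)^[i] y).1 ≤ β + tail / 2 ^ (i + 1) := by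
        refine (seqDist_le_of_forall_lt hβ hhead).trans_eq ?_
        simp_rw [show ∀ j, j + (i + 1) = i + (j + 1) from fun j => by omega,
          shiftMap_iterate_apply_add, tail]
    _ ≤ β + tail / 2 := by gcongr; exact le_self_pow₀ one_le_two (Nat.succ_ne_zero i)
    _ ≤ β + seqDist x.1 y.1 := by
        rw [seqDist_eq_sum_add x.1 y.1 1]
        simp only [Finset.range_one, Finset.sum_singleton, pow_one]
        linarith [div_nonneg (dist_nonneg (x := x.1 0) (y := y.1 0)) zero_le_two]

theorem hasFiniteCoding_seqDist [CompactSpace X] (T : X → X) {ε : ℝ} (hε : 0 < ε) :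
    HasFiniteCoding (fun x y : InverseLimit T => seqDist x.1 y.1) ε := by
  set D := Metric.diam (univ : Set X)
  obtain ⟨m, hm⟩ := pow_unbounded_of_one_lt (D / (ε / 2)) one_lt_two
  have hDm : D / 2 ^ m < ε / 2 := by
    rw [div_lt_iff₀ (by positivity)] at hm ⊢
    linarith
  obtain ⟨k, c, hc⟩ := hasFiniteCoding_dist (X := X) (half_pos hε)
  refine ⟨_, Fintype.equivFin (Fin m → Fin k) ∘ fun x j => c (x.1 j), fun x y hxy => ?_⟩
  have hxy := (Fintype.equivFin _).injective hxy
  calc seqDist x.1 y.1 ≤ ε / 2 + seqDist (fun j => x.1 (j + m)) (fun j => y.1 (j + m)) / 2 ^ m :=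
        seqDist_le_of_forall_lt (half_pos hε).le fun j hj => hc _ _ (congrFun hxy ⟨j, hj⟩)
    _ ≤ ε / 2 + D / 2 ^ m := by gcongr; exact seqDist_le_diam _ _
    _ ≤ ε := by linarith

theorem sepPnD_inverseLimit_le_mul [BoundedSpace X] (g : X → ℝ) (n : ℕ) {δ : ℝ} (hδ : 0 < δ)
    (K : Set (InverseLimit T)) {N : ℕ}
    (hN : ∀ B, IsOrbitSeparated (fun x y : InverseLimit T => seqDist x.1 y.1) id 1 (δ / 2) B →
      B.card ≤ N)
    (hbdd : BddAbove (separatedSums dist T g n (δ / 4) ((fun x => x.1 0) '' K))) :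
    sepPnD (fun x y => seqDist x.1 y.1) (shiftMap T) (fun x => g (x.1 0)) n δ K ≤
      N * sepPnD dist T g n (δ / 4) ((fun x => x.1 0) '' K) := by
  have := sepPnD_nonneg hbdd
  refine sepPnD_le (by positivity) fun E hEK hE => ?_
  let R : InverseLimit T → InverseLimit T → Prop :=
    fun x e => ∀ i < n, dist (T^[i] (x.1 0)) (T^[i] (e.1 0)) ≤ δ / 4
  have hR : ∀ e, ∀ B ⊆ E, (∀ z ∈ B, R z e) → B.card ≤ N := fun e B hBE hBR => by
    refine hN B fun x hx y hy hxy => ⟨0, one_pos, ?_⟩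
    obtain ⟨i, hi, hsep⟩ := hE (hBE hx) (hBE hy) hxy
    have hclose : ∀ j ≤ i, dist (T^[j] (x.1 0)) (T^[j] (y.1 0)) ≤ δ / 2 := fun j hj =>
      calc _ ≤ dist (T^[j] (x.1 0)) (T^[j] (e.1 0)) + dist (T^[j] (y.1 0)) (T^[j] (e.1 0)) :=
            dist_triangle_right _ _ _
        _ ≤ δ / 4 + δ / 4 := add_le_add (hBR x hx j (by omega)) (hBR y hy j (by omega))
        _ = δ / 2 := by ring
    have := seqDist_shiftMap_iterate_le x y i hclose
    simp only [iterate_zero, id_eq]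
    linarith
  obtain ⟨E', hE'E, hE'R, hsum⟩ := Finset.exists_subset_pairwise_not_and_sum_le
    (R := R) (fun x i _ => by rw [dist_self]; positivity)
    (fun x y h i hi => by rw [dist_comm]; exact h i hi)
    (w := fun x => Real.exp (birkhoffSum T g n (x.1 0))) (fun _ => (Real.exp_pos _).le) N E
    fun e _ => hR e
  calc ∑ x ∈ E, Real.exp (birkhoffSum (shiftMap T) (fun x => g (x.1 0)) n x)
      = ∑ x ∈ E, Real.exp (birkhoffSum T g n (x.1 0)) :=
        Finset.sum_congr rfl fun x _ => by rw [← semiconj_shiftMap.birkhoffSum_comp]; rfl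
    _ ≤ N * ∑ x ∈ E', Real.exp (birkhoffSum T g n (x.1 0)) := hsum
    _ ≤ N * sepPnD dist T g n (δ / 4) ((fun x => x.1 0) '' K) := by
        gcongr
        refine sum_le_sepPnD_image (by positivity) hbdd
          ((Finset.coe_subset.2 hE'E).trans hEK) fun x hx y hy hxy => ?_
        simpa [R] using hE'R hx hy hxy

end InverseLimit

theorem stmt17_general [MetricSpace X] [CompactSpace X]
    (T : X → X) (f : C(X, ℝ))
    (K : ℕ → Set {p : ℕ → X // ∀ i, T (p (i + 1)) = p i})
    (hKne : ∀ n, (K n).Nonempty) :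
    (⨆ (δ : ℝ) (_ : 0 < δ), atTop.limsup fun n : ℕ =>
        ((Real.log (sepPnD
            (fun x y => ∑' i : ℕ, dist (x.1 i) (y.1 i) / 2 ^ (i + 1))
            (shiftMap T) (fun x => f (x.1 0)) n δ (K n)) / n : ℝ) : EReal)) =
      ⨆ (δ : ℝ) (_ : 0 < δ), atTop.limsup fun n : ℕ =>
        ((Real.log (sepPnD dist T (⇑f) n δ
            ((fun x : {p : ℕ → X // ∀ i, T (p (i + 1)) = p i} => x.1 0) '' K n))
          / n : ℝ) : EReal) := by
  have hf : BddAbove (range f) := (isCompact_range f.continuous).bddAbove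
  have hbddX : ∀ δ > 0, ∀ n, BddAbove (separatedSums dist T f n δ ((fun x => x.1 0) '' K n)) :=
    fun δ hδ n => (hasFiniteCoding_dist hδ).bddAbove_separatedSums hf
  have hbddIL : ∀ δ > 0, ∀ n, BddAbove (separatedSums (fun x y : InverseLimit T => seqDist x.1 y.1)
      (shiftMap T) (fun x => f (x.1 0)) n δ (K n)) := fun δ hδ n =>
    (hasFiniteCoding_seqDist T hδ).bddAbove_separatedSums (hf.mono (range_comp_subset_range _ _))
  have hposIL := fun δ hδ n => sepPnD_pos (hbddIL δ hδ n) (hKne n)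
  have hposX := fun δ hδ n => sepPnD_pos (hbddX δ hδ n) ((hKne n).image _)
  refine le_antisymm (iSup_limsup_log_div_le hposIL hposX fun δ hδ => ?_)
    (iSup_limsup_log_div_le hposX hposIL fun δ hδ => ?_)
  · obtain ⟨N, hN⟩ := (hasFiniteCoding_seqDist T (half_pos hδ)).exists_card_le_pow
    exact ⟨δ / 4, by positivity, N, fun n => sepPnD_inverseLimit_le_mul f n hδ (K n)
      (fun B hB => by simpa using hN id 1 B hB) (hbddX _ (by positivity) n)⟩
  · refine ⟨δ / 2, half_pos hδ, 1, fun n => ?_⟩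
    rw [one_mul]
    exact sepPnD_image_le semiconj_shiftMap
      (fun a b h => (div_lt_div_of_pos_right h two_pos).trans_le (half_dist_le_seqDist a.1 b.1))
      f n (K n) (hbddIL _ (half_pos hδ) n)

/-- Let `(X̃,T̃)` be the inverse limit of a surjective
continuous `T` on a compact metric space `X`, with metric
`d_T(x̃,ỹ) = ∑_i d(x_i,y_i)/2^i`, and let `π₁` be the projection to the first
coordinate. For any sequence of nonempty closed `K_n ⊆ X̃`,
`lim_{δ→0} limsup_n (1/n) log P_n(T̃, f∘π₁, δ, K_n)
  = lim_{δ→0} limsup_n (1/n) log P_n(T, f, δ, π₁(K_n))`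
(the expressions being nonincreasing in `δ`, the limits are suprema over
`δ > 0`). -/
theorem stmt17 [MetricSpace X] [CompactSpace X]
    (T : X → X) (hT : Continuous T) (hTs : Function.Surjective T) (f : C(X, ℝ))
    (K : ℕ → Set {p : ℕ → X // ∀ i, T (p (i + 1)) = p i})
    (hKne : ∀ n, (K n).Nonempty) (hKcl : ∀ n, IsClosed (K n)) :
    (⨆ (δ : ℝ) (_ : 0 < δ), atTop.limsup fun n : ℕ =>
        ((Real.log (sepPnD
            (fun x y => ∑' i : ℕ, dist (x.1 i) (y.1 i) / 2 ^ (i + 1))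
            (shiftMap T) (fun x => f (x.1 0)) n δ (K n)) / n : ℝ) : EReal)) =
      ⨆ (δ : ℝ) (_ : 0 < δ), atTop.limsup fun n : ℕ =>
        ((Real.log (sepPnD dist T (⇑f) n δ
            ((fun x : {p : ℕ → X // ∀ i, T (p (i + 1)) = p i} => x.1 0) '' K n))
          / n : ℝ) : EReal) :=
  stmt17_general T f K hKne
end
end
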